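/- L² stability with respect to the initial datum: let u1, u2 be solutions of problems P(Ω,u01) and P(Ω,u02) respectively, both bounded by a constant M on [0,T]×Ω. Then there exists a constant C > 0, depending only on T, λ, |Ω|, h, M and on the bound and Lipschitz constant of K, such that for every t ∈ [0,T], ‖u1(t,·) − u2(t,·)‖_{L²(Ω)} ≤ C ‖u01 − u02‖_{L²(Ω)}. -/

import Mathlib

/-!
For every `x`, the difference `w = u₁ - u₂` is differentiable in `t` with a derivative bounded
uniformly in `(t, x)`; by dominated convergence `t ↦ w(t)` is then differentiable as a path in
`L²(Ω)`, with derivative `w'(t, x)`. Since `ξ ↦ K(ξ/h) ξ` is Lipschitz on `[-2M, 2M]` and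
`‖·‖_{L¹} ≤ |Ω|^{1/2} ‖·‖_{L²}`, the nonlocal term is Lipschitz in `L²` on functions bounded by
`M`, so `‖w'(t)‖ ≤ c ‖w(t)‖ + λ ‖w(0)‖`. Grönwall's inequality bounds `‖w(t)‖` by
`gronwallBound 1 c λ T · ‖w(0)‖`.
-/

open MeasureTheory Set

/-- `u : [0,T]×Ω → ℝ` is a solution of problem P(Ω,u0): `u(t,·)` is measurable and
bounded uniformly in `t ∈ [0,T]`, `u(0,·) = u0` on `Ω`, and for every `(t,x)` the map
`t ↦ u(t,x)` is differentiable with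
`∂_t u(t,x) = ∫_Ω K_h(u(t,y)−u(t,x))(u(t,y)−u(t,x)) dy + λ(u0(x)−u(t,x))`. -/
def IsSolution (d : ℕ) (Ω : Set (Fin d → ℝ)) (K : ℝ → ℝ) (h lam T : ℝ)
    (u0 : (Fin d → ℝ) → ℝ) (u : ℝ → (Fin d → ℝ) → ℝ) : Prop :=
  (∀ t ∈ Set.Icc (0:ℝ) T, Measurable (u t)) ∧
  (∃ M : ℝ, ∀ t ∈ Set.Icc (0:ℝ) T, ∀ x ∈ Ω, |u t x| ≤ M) ∧
  (∀ x ∈ Ω, u 0 x = u0 x) ∧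
  (∀ t ∈ Set.Icc (0:ℝ) T, ∀ x ∈ Ω,
    HasDerivWithinAt (fun τ => u τ x)
      ((∫ y in Ω, K ((u t y - u t x) / h) * (u t y - u t x)) + lam * (u0 x - u t x))
      (Set.Icc 0 T) t)

open Filter Topology
open scoped ENNReal NNReal

theorem gronwallBound_mul_left (a δ K ε x : ℝ) :
    gronwallBound (a * δ) K (a * ε) x = a * gronwallBound δ K ε x := by
  unfold gronwallBound
  split_ifs <;> ring

theorem one_le_gronwallBound {K ε x : ℝ} (hK : 0 ≤ K) (hε : 0 ≤ ε) (hx : 0 ≤ x) :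
    1 ≤ gronwallBound 1 K ε x :=
  (gronwallBound_x0 1 K ε).ge.trans (gronwallBound_mono zero_le_one hε hK hx)

section Lp

variable {α E : Type*} [MeasurableSpace α] {μ : Measure α} [NormedAddCommGroup E]

theorem tendsto_eLpNorm_zero_of_tendsto_ae_of_bound [IsFiniteMeasure μ] {ι : Type*}
    {l : Filter ι} [l.IsCountablyGenerated] {p : ℝ≥0∞} (hp : p ≠ ∞) {F : ι → α → E} {C : ℝ}
    (hF : ∀ᶠ i in l, AEStronglyMeasurable (F i) μ) (hbound : ∀ᶠ i in l, ∀ᵐ x ∂μ, ‖F i x‖ ≤ C)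
    (hlim : ∀ᵐ x ∂μ, Tendsto (fun i => F i x) l (𝓝 0)) :
    Tendsto (fun i => eLpNorm (F i) p μ) l (𝓝 0) := by
  rcases eq_or_ne p 0 with rfl | hp0
  · simpa using tendsto_const_nhds
  have hp_pos : 0 < p.toReal := ENNReal.toReal_pos hp0 hp
  simp_rw [eLpNorm_eq_lintegral_rpow_enorm_toReal hp0 hp]
  have hint : Tendsto (fun i => ∫⁻ x, ‖F i x‖ₑ ^ p.toReal ∂μ) l (𝓝 (∫⁻ _, 0 ∂μ)) := by
    refine tendsto_lintegral_filter_of_dominated_convergence' (fun _ => ‖C‖ₑ ^ p.toReal)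
      ?_ ?_ (by simp [lintegral_const, ENNReal.mul_eq_top, hp_pos.le]) ?_
    · filter_upwards [hF] with i hi using hi.enorm.pow_const _
    · filter_upwards [hbound] with i hi
      filter_upwards [hi] with x hx
      gcongr
      exact enorm_le_iff_norm_le.mpr (hx.trans (Real.le_norm_self C))
    · filter_upwards [hlim] with x hx
      have hx' : Tendsto (fun i => ‖F i x‖ₑ) l (𝓝 0) := by
        simpa [Function.comp_def] using (continuous_enorm.tendsto 0).comp hx
      simpa [Function.comp_def, hp_pos] using
        ((ENNReal.continuous_rpow_const (y := p.toReal)).tendsto 0).comp hx'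
  rw [lintegral_zero] at hint
  simpa [Function.comp_def, hp_pos] using
    ((ENNReal.continuous_rpow_const (y := 1 / p.toReal)).tendsto 0).comp hint

theorem hasDerivWithinAt_Lp_of_ae_hasDerivWithinAt [NormedSpace ℝ E] [IsFiniteMeasure μ]
    {p : ℝ≥0∞} [Fact (1 ≤ p)] (hp : p ≠ ∞) {s : Set ℝ} (hs : Convex ℝ s) {w w' : ℝ → α → E}
    {f f' : ℝ → Lp E p μ} {B : ℝ} (hf : ∀ t ∈ s, f t =ᵐ[μ] w t) (hf' : ∀ t ∈ s, f' t =ᵐ[μ] w' t)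
    (hw : ∀ᵐ x ∂μ, ∀ t ∈ s, HasDerivWithinAt (fun τ => w τ x) (w' t x) s t ∧ ‖w' t x‖ ≤ B)
    {t : ℝ} (ht : t ∈ s) : HasDerivWithinAt f (f' t) s t := by
  rw [hasDerivWithinAt_iff_tendsto_slope, tendsto_iff_norm_sub_tendsto_zero]
  set q : ℝ → α → E := fun r x => (r - t)⁻¹ • (w r x - w t x) - w' t x
  have hq : ∀ r ∈ s, ⇑(slope f t r - f' t) =ᵐ[μ] q r := by
    intro r hr
    filter_upwards [Lp.coeFn_sub (slope f t r) (f' t), Lp.coeFn_smul (r - t)⁻¹ (f r - f t),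
      Lp.coeFn_sub (f r) (f t), hf r hr, hf t ht, hf' t ht] with x h₁ h₂ h₃ h₄ h₅ h₆
    rw [slope_def_module] at h₁ ⊢
    simp only [Pi.sub_apply, Pi.smul_apply] at h₁ h₂ h₃
    rw [h₁, h₂, h₃, h₄, h₅, h₆]
  have hmem : ∀ᶠ r in 𝓝[s \ {t}] t, r ∈ s \ {t} := self_mem_nhdsWithin
  have hlim : Tendsto (fun r => eLpNorm (q r) p μ) (𝓝[s \ {t}] t) (𝓝 0) := by
    refine tendsto_eLpNorm_zero_of_tendsto_ae_of_bound hp (C := B + B) ?_ ?_ ?_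
    · filter_upwards [hmem] with r hr using (Lp.aestronglyMeasurable _).congr (hq r hr.1)
    · filter_upwards [hmem] with r hr
      filter_upwards [hw] with x hx
      have hmvt : ‖w r x - w t x‖ ≤ B * ‖r - t‖ :=
        hs.norm_image_sub_le_of_norm_hasDerivWithin_le (fun τ hτ => (hx τ hτ).1)
          (fun τ hτ => (hx τ hτ).2) ht hr.1
      calc ‖q r x‖ ≤ ‖(r - t)⁻¹ • (w r x - w t x)‖ + ‖w' t x‖ := norm_sub_le _ _
        _ ≤ B + B := by
          gcongr
          · rw [norm_smul, norm_inv, inv_mul_le_iff₀ (norm_pos_iff.mpr (sub_ne_zero.mpr hr.2)),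
              mul_comm]
            exact hmvt
          · exact (hx t ht).2
    · filter_upwards [hw] with x hx
      simpa [q, slope_def_module] using
        (hasDerivWithinAt_iff_tendsto_slope.mp (hx t ht).1).sub_const (w' t x)
  refine ((ENNReal.tendsto_toReal ENNReal.zero_ne_top).comp hlim).congr' ?_
  filter_upwards [hmem] with r hr
  rw [Function.comp_apply, Lp.norm_def, eLpNorm_congr_ae (hq r hr.1)]

theorem norm_le_gronwallBound_of_ae_hasDerivWithinAt [NormedSpace ℝ E] [IsFiniteMeasure μ]
    {p : ℝ≥0∞} [Fact (1 ≤ p)] (hp : p ≠ ∞) {a b K ε B : ℝ} {w w' : ℝ → α → E}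
    {f f' : ℝ → Lp E p μ} (hf : ∀ t ∈ Icc a b, f t =ᵐ[μ] w t)
    (hf' : ∀ t ∈ Icc a b, f' t =ᵐ[μ] w' t)
    (hw : ∀ᵐ x ∂μ, ∀ t ∈ Icc a b,
      HasDerivWithinAt (fun τ => w τ x) (w' t x) (Icc a b) t ∧ ‖w' t x‖ ≤ B)
    (bound : ∀ t ∈ Icc a b, ‖f' t‖ ≤ K * ‖f t‖ + ε) :
    ∀ t ∈ Icc a b, ‖f t‖ ≤ gronwallBound ‖f a‖ K ε (t - a) := by
  have hderiv : ∀ t ∈ Icc a b, HasDerivWithinAt f (f' t) (Icc a b) t := fun t ht =>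
    hasDerivWithinAt_Lp_of_ae_hasDerivWithinAt hp (convex_Icc a b) hf hf' hw ht
  refine norm_le_gronwallBound_of_norm_deriv_right_le
    (fun t ht => (hderiv t ht).continuousWithinAt) (fun t ht => ?_) le_rfl
    (fun t ht => bound t (Ico_subset_Icc_self ht))
  exact (hderiv t (Ico_subset_Icc_self ht)).mono_of_mem_nhdsWithin (Icc_mem_nhdsGE_of_mem ht)

end Lp

section L2

variable {α : Type*} [MeasurableSpace α] {μ : Measure α}

theorem L2.norm_eq_sqrt_integral_sq {F : Lp ℝ 2 μ} {f : α → ℝ} (hF : F =ᵐ[μ] f) :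
    ‖F‖ = √(∫ x, f x ^ 2 ∂μ) := by
  rw [← Real.sqrt_sq (norm_nonneg F), ← real_inner_self_eq_norm_sq, L2.inner_def]
  congr 1
  refine integral_congr_ae ?_
  filter_upwards [hF] with x hx
  simp [hx, sq]

theorem sq_integral_abs_le_measureReal_univ_mul_integral_sq [IsFiniteMeasure μ] {f : α → ℝ}
    (hf : MemLp f 2 μ) : (∫ x, |f x| ∂μ) ^ 2 ≤ μ.real univ * ∫ x, f x ^ 2 ∂μ := by
  have hf₁ : Integrable (fun x => |f x|) μ := (hf.integrable one_le_two).abs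
  have hf₂ : Integrable (fun x => f x ^ 2) μ := hf.integrable_sq
  have hquad : ∀ r : ℝ,
      0 ≤ μ.real univ * (r * r) + (-2 * ∫ x, |f x| ∂μ) * r + ∫ x, f x ^ 2 ∂μ := by
    intro r
    have hexp : ∫ x, (|f x| - r) ^ 2 ∂μ =
        μ.real univ * (r * r) + (-2 * ∫ x, |f x| ∂μ) * r + ∫ x, f x ^ 2 ∂μ := by
      have hsq : ∀ x, (|f x| - r) ^ 2 = f x ^ 2 - 2 * r * |f x| + r * r := fun x => by
        rw [sub_sq, sq_abs]; ring
      have hf₂₁ : Integrable (fun x => f x ^ 2 - 2 * r * |f x|) μ := hf₂.sub (hf₁.const_mul _)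
      simp_rw [hsq]
      rw [integral_add hf₂₁ (integrable_const _), integral_sub hf₂ (hf₁.const_mul _),
        integral_const_mul, integral_const, smul_eq_mul]
      ring
    exact hexp ▸ integral_nonneg fun x => sq_nonneg _
  have := discrim_le_zero hquad
  rw [discrim] at this
  linarith

end L2

section NonlocalFlux

variable {α : Type*} [MeasurableSpace α] {μ : Measure α}

noncomputable def nonlocalFlux (μ : Measure α) (K : ℝ → ℝ) (h : ℝ) (v : α → ℝ) (x : α) : ℝ :=
  ∫ y, K ((v y - v x) / h) * (v y - v x) ∂μ

/-- For `μ = volume.restrict Ω` this is, by definition, the time derivative in `IsSolution`. -/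
noncomputable def nonlocalRHS (μ : Measure α) (K : ℝ → ℝ) (h lam : ℝ) (u₀ v : α → ℝ) (x : α) :
    ℝ :=
  nonlocalFlux μ K h v x + lam * (u₀ x - v x)

variable {K : ℝ → ℝ} {BK : ℝ} {LK : ℝ≥0} {h M : ℝ}

theorem abs_kernel_mul_sub_le (hK₀ : ∀ ξ, 0 ≤ K ξ) (hKb : ∀ ξ, K ξ ≤ BK)
    (hKlip : LipschitzWith LK K) (hh : 0 < h) (p q : ℝ) :
    |K (p / h) * p - K (q / h) * q| ≤ (BK + LK * |q| / h) * |p - q| := by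
  have hlip : |K (p / h) - K (q / h)| ≤ LK * |p - q| / h := by
    have := hKlip.dist_le_mul (p / h) (q / h)
    rwa [Real.dist_eq, Real.dist_eq, ← sub_div, abs_div, abs_of_pos hh, ← mul_div_assoc] at this
  calc |K (p / h) * p - K (q / h) * q|
      = |K (p / h) * (p - q) + (K (p / h) - K (q / h)) * q| := by congr 1; ring
    _ ≤ K (p / h) * |p - q| + |K (p / h) - K (q / h)| * |q| := by
      grw [abs_add_le, abs_mul, abs_mul, abs_of_nonneg (hK₀ _)]
    _ ≤ BK * |p - q| + LK * |p - q| / h * |q| := by gcongr; exact hKb _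
    _ = (BK + LK * |q| / h) * |p - q| := by ring

theorem measurable_nonlocalFlux [SFinite μ] (hK : Measurable K) {v : α → ℝ} (hv : Measurable v) :
    Measurable (nonlocalFlux μ K h v) := by
  have : StronglyMeasurable fun p : α × α => K ((v p.2 - v p.1) / h) * (v p.2 - v p.1) := by
    apply Measurable.stronglyMeasurable
    fun_prop
  exact this.integral_prod_right'.measurable

theorem measurable_nonlocalRHS [SFinite μ] {lam : ℝ} (hK : Measurable K) {u₀ v : α → ℝ}
    (hu₀ : Measurable u₀) (hv : Measurable v) : Measurable (nonlocalRHS μ K h lam u₀ v) :=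
  (measurable_nonlocalFlux hK hv).add ((hu₀.sub hv).const_mul lam)

theorem integrable_kernel_mul_sub [IsFiniteMeasure μ] (hK₀ : ∀ ξ, 0 ≤ K ξ)
    (hKb : ∀ ξ, K ξ ≤ BK) (hK : Measurable K) {v : α → ℝ} (hv : Measurable v)
    (hvM : ∀ᵐ y ∂μ, |v y| ≤ M) (c : ℝ) :
    Integrable (fun y => K ((v y - c) / h) * (v y - c)) μ := by
  refine Integrable.of_bound (C := BK * (M + |c|)) (by fun_prop) ?_
  filter_upwards [hvM] with y hy
  rw [Real.norm_eq_abs, abs_mul, abs_of_nonneg (hK₀ _)]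
  gcongr
  · exact (hK₀ 0).trans (hKb 0)
  · exact hKb _
  · exact (abs_sub _ _).trans (by gcongr)

theorem abs_nonlocalFlux_le [IsFiniteMeasure μ] (hK₀ : ∀ ξ, 0 ≤ K ξ) (hKb : ∀ ξ, K ξ ≤ BK)
    {v : α → ℝ} (hvM : ∀ᵐ y ∂μ, |v y| ≤ M) {x : α} (hx : |v x| ≤ M) :
    |nonlocalFlux μ K h v x| ≤ BK * (2 * M) * μ.real univ := by
  rw [nonlocalFlux, ← Real.norm_eq_abs]
  refine norm_integral_le_of_norm_le_const ?_
  filter_upwards [hvM] with y hy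
  rw [Real.norm_eq_abs, abs_mul, abs_of_nonneg (hK₀ _)]
  gcongr
  · exact (hK₀ 0).trans (hKb 0)
  · exact hKb _
  · exact (abs_sub _ _).trans (by linarith)

theorem abs_nonlocalRHS_le [IsFiniteMeasure μ] (hK₀ : ∀ ξ, 0 ≤ K ξ) (hKb : ∀ ξ, K ξ ≤ BK)
    {lam M₀ : ℝ} (hlam : 0 ≤ lam) {u₀ v : α → ℝ} (hvM : ∀ᵐ y ∂μ, |v y| ≤ M) {x : α}
    (hx : |v x| ≤ M) (hu₀x : |u₀ x| ≤ M₀) :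
    |nonlocalRHS μ K h lam u₀ v x| ≤ BK * (2 * M) * μ.real univ + lam * (M₀ + M) := by
  calc |nonlocalRHS μ K h lam u₀ v x|
      ≤ |nonlocalFlux μ K h v x| + lam * (|u₀ x| + |v x|) := by
        rw [nonlocalRHS]
        grw [abs_add_le, abs_mul, abs_of_nonneg hlam, abs_sub]
    _ ≤ BK * (2 * M) * μ.real univ + lam * (M₀ + M) := by
        grw [abs_nonlocalFlux_le hK₀ hKb hvM hx, hu₀x, hx]

variable [IsFiniteMeasure μ] (hK₀ : ∀ ξ, 0 ≤ K ξ) (hKb : ∀ ξ, K ξ ≤ BK)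
  (hKlip : LipschitzWith LK K) (hh : 0 < h) {v₁ v₂ : α → ℝ} (hv₁ : Measurable v₁)
  (hv₂ : Measurable v₂) (hv₁M : ∀ᵐ y ∂μ, |v₁ y| ≤ M) (hv₂M : ∀ᵐ y ∂μ, |v₂ y| ≤ M)
include hK₀ hKb hKlip hh hv₁ hv₂ hv₁M hv₂M

theorem abs_nonlocalFlux_sub_le {x : α} (hx : |v₂ x| ≤ M) :
    |nonlocalFlux μ K h v₁ x - nonlocalFlux μ K h v₂ x| ≤
      (BK + LK * (2 * M) / h) * (∫ y, |v₁ y - v₂ y| ∂μ + μ.real univ * |v₁ x - v₂ x|) := by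
  set L := BK + LK * (2 * M) / h
  have hL : 0 ≤ L := by
    have := (abs_nonneg _).trans hx
    have := (hK₀ 0).trans (hKb 0)
    positivity
  have hw : Integrable (fun y => |v₁ y - v₂ y|) μ := by
    refine Integrable.of_bound (C := M + M) (by fun_prop) ?_
    filter_upwards [hv₁M, hv₂M] with y hy₁ hy₂
    rw [Real.norm_eq_abs, abs_abs]
    exact (abs_sub _ _).trans (by gcongr)
  have hpt : ∀ᵐ y ∂μ, |K ((v₁ y - v₁ x) / h) * (v₁ y - v₁ x) -
      K ((v₂ y - v₂ x) / h) * (v₂ y - v₂ x)| ≤ L * (|v₁ y - v₂ y| + |v₁ x - v₂ x|) := by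
    filter_upwards [hv₂M] with y hy
    calc _ ≤ (BK + LK * |v₂ y - v₂ x| / h) * |(v₁ y - v₂ y) - (v₁ x - v₂ x)| := by
          convert abs_kernel_mul_sub_le hK₀ hKb hKlip hh (v₁ y - v₁ x) (v₂ y - v₂ x) using 3
          ring
      _ ≤ L * (|v₁ y - v₂ y| + |v₁ x - v₂ x|) := by
          have : |v₂ y - v₂ x| ≤ 2 * M := (abs_sub _ _).trans (by linarith)
          refine mul_le_mul ?_ (abs_sub _ _) (abs_nonneg _) hL
          unfold L
          gcongr
  have hi₁ := integrable_kernel_mul_sub (h := h) hK₀ hKb hKlip.continuous.measurable hv₁ hv₁M (v₁ x)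
  have hi₂ := integrable_kernel_mul_sub (h := h) hK₀ hKb hKlip.continuous.measurable hv₂ hv₂M (v₂ x)
  calc |nonlocalFlux μ K h v₁ x - nonlocalFlux μ K h v₂ x|
      = |∫ y, (K ((v₁ y - v₁ x) / h) * (v₁ y - v₁ x) -
          K ((v₂ y - v₂ x) / h) * (v₂ y - v₂ x)) ∂μ| := by
        rw [nonlocalFlux, nonlocalFlux, integral_sub hi₁ hi₂]
    _ ≤ ∫ y, L * (|v₁ y - v₂ y| + |v₁ x - v₂ x|) ∂μ :=
        abs_integral_le_integral_abs.trans
          (integral_mono_ae (hi₁.sub hi₂).abs ((hw.add (integrable_const _)).const_mul L) hpt)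
    _ = L * (∫ y, |v₁ y - v₂ y| ∂μ + μ.real univ * |v₁ x - v₂ x|) := by
        rw [integral_const_mul, integral_add hw (integrable_const _), integral_const, smul_eq_mul]

theorem L2.norm_le_of_ae_eq_nonlocalFlux_sub (hM : 0 ≤ M) {D W : Lp ℝ 2 μ}
    (hD : D =ᵐ[μ] fun x => nonlocalFlux μ K h v₁ x - nonlocalFlux μ K h v₂ x)
    (hW : W =ᵐ[μ] fun x => v₁ x - v₂ x) :
    ‖D‖ ≤ 2 * (BK + LK * (2 * M) / h) * μ.real univ * ‖W‖ := by
  set L := BK + LK * (2 * M) / h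
  set V := μ.real univ
  set A := ∫ y, |v₁ y - v₂ y| ∂μ
  have hL : 0 ≤ L := by
    have := (hK₀ 0).trans (hKb 0)
    positivity
  have hW₂ : MemLp (fun x => v₁ x - v₂ x) 2 μ := (Lp.memLp W).ae_eq hW
  have hpt : ∀ᵐ x ∂μ, (nonlocalFlux μ K h v₁ x - nonlocalFlux μ K h v₂ x) ^ 2 ≤
      2 * L ^ 2 * A ^ 2 + 2 * L ^ 2 * V ^ 2 * (v₁ x - v₂ x) ^ 2 := by
    filter_upwards [hv₂M] with x hx
    have hΔ := abs_nonlocalFlux_sub_le hK₀ hKb hKlip hh hv₁ hv₂ hv₁M hv₂M hx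
    calc (nonlocalFlux μ K h v₁ x - nonlocalFlux μ K h v₂ x) ^ 2
        ≤ (L * (A + V * |v₁ x - v₂ x|)) ^ 2 := by
          rw [← sq_abs]
          exact pow_le_pow_left₀ (abs_nonneg _) hΔ 2
      _ ≤ 2 * L ^ 2 * A ^ 2 + 2 * L ^ 2 * V ^ 2 * (v₁ x - v₂ x) ^ 2 := by
          rw [← sq_abs (v₁ x - v₂ x)]
          nlinarith [sq_nonneg (L * A - L * V * |v₁ x - v₂ x|)]
  have hint : ∫ x, (nonlocalFlux μ K h v₁ x - nonlocalFlux μ K h v₂ x) ^ 2 ∂μ ≤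
      (2 * L * V) ^ 2 * ∫ x, (v₁ x - v₂ x) ^ 2 ∂μ :=
    calc _ ≤ ∫ x, (2 * L ^ 2 * A ^ 2 + 2 * L ^ 2 * V ^ 2 * (v₁ x - v₂ x) ^ 2) ∂μ :=
          integral_mono_of_nonneg (ae_of_all _ fun _ => sq_nonneg _)
            ((integrable_const _).add (hW₂.integrable_sq.const_mul _)) hpt
      _ = 2 * L ^ 2 * V * A ^ 2 + 2 * L ^ 2 * V ^ 2 * ∫ x, (v₁ x - v₂ x) ^ 2 ∂μ := by
          rw [integral_add (integrable_const _) (hW₂.integrable_sq.const_mul _), integral_const,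
            integral_const_mul, smul_eq_mul]
          ring
      _ ≤ 2 * L ^ 2 * V * (V * ∫ x, (v₁ x - v₂ x) ^ 2 ∂μ) +
            2 * L ^ 2 * V ^ 2 * ∫ x, (v₁ x - v₂ x) ^ 2 ∂μ := by
          gcongr
          exact sq_integral_abs_le_measureReal_univ_mul_integral_sq hW₂
      _ = (2 * L * V) ^ 2 * ∫ x, (v₁ x - v₂ x) ^ 2 ∂μ := by ring
  rw [L2.norm_eq_sqrt_integral_sq hD, L2.norm_eq_sqrt_integral_sq hW]
  calc _ ≤ √((2 * L * V) ^ 2 * ∫ x, (v₁ x - v₂ x) ^ 2 ∂μ) := Real.sqrt_le_sqrt hint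
    _ = 2 * L * V * √(∫ x, (v₁ x - v₂ x) ^ 2 ∂μ) := by
      rw [Real.sqrt_mul (sq_nonneg _), Real.sqrt_sq (by positivity)]

theorem L2.norm_le_of_ae_eq_nonlocalRHS_sub (hM : 0 ≤ M) {lam : ℝ} (hlam : 0 ≤ lam)
    {u₀₁ u₀₂ : α → ℝ} {G W W₀ : Lp ℝ 2 μ}
    (hG : G =ᵐ[μ] fun x => nonlocalRHS μ K h lam u₀₁ v₁ x - nonlocalRHS μ K h lam u₀₂ v₂ x)
    (hW : W =ᵐ[μ] fun x => v₁ x - v₂ x) (hW₀ : W₀ =ᵐ[μ] fun x => u₀₁ x - u₀₂ x) :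
    ‖G‖ ≤ (2 * (BK + LK * (2 * M) / h) * μ.real univ + lam) * ‖W‖ + lam * ‖W₀‖ := by
  have hD : ⇑(G - lam • (W₀ - W)) =ᵐ[μ]
      fun x => nonlocalFlux μ K h v₁ x - nonlocalFlux μ K h v₂ x := by
    filter_upwards [Lp.coeFn_sub G (lam • (W₀ - W)), Lp.coeFn_smul lam (W₀ - W),
      Lp.coeFn_sub W₀ W, hG, hW, hW₀] with x h₁ h₂ h₃ h₄ h₅ h₆
    simp only [Pi.sub_apply, Pi.smul_apply, smul_eq_mul] at h₁ h₂ h₃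
    rw [h₁, h₂, h₃, h₄, h₅, h₆, nonlocalRHS, nonlocalRHS]
    ring
  have hDW := L2.norm_le_of_ae_eq_nonlocalFlux_sub hK₀ hKb hKlip hh hv₁ hv₂ hv₁M hv₂M hM hD hW
  calc ‖G‖ = ‖(G - lam • (W₀ - W)) + lam • (W₀ - W)‖ := by rw [sub_add_cancel]
    _ ≤ ‖G - lam • (W₀ - W)‖ + ‖lam • (W₀ - W)‖ := norm_add_le _ _
    _ ≤ ‖G - lam • (W₀ - W)‖ + lam * (‖W₀‖ + ‖W‖) := by
      rw [norm_smul, Real.norm_of_nonneg hlam]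
      gcongr
      exact norm_sub_le _ _
    _ ≤ _ := by linarith

end NonlocalFlux

section BoundedSolution

variable {α : Type*} [MeasurableSpace α] {μ : Measure α}

/-- A solution of P on a measure space, bounded by `M` together with its initial datum. The
conditions hold for a.e. `x` simultaneously for all `t`, so that the mean value theorem applies
along each `t ↦ u t x`. -/
structure IsBoundedSolution (μ : Measure α) (K : ℝ → ℝ) (h lam T M : ℝ) (u₀ : α → ℝ)
    (u : ℝ → α → ℝ) : Prop where
  measurable_initial : Measurable u₀
  abs_initial_le : ∀ᵐ x ∂μ, |u₀ x| ≤ M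
  measurable : ∀ t ∈ Icc 0 T, Measurable (u t)
  abs_le : ∀ᵐ x ∂μ, ∀ t ∈ Icc 0 T, |u t x| ≤ M
  hasDerivWithinAt : ∀ᵐ x ∂μ, ∀ t ∈ Icc 0 T,
    HasDerivWithinAt (fun τ => u τ x) (nonlocalRHS μ K h lam u₀ (u t) x) (Icc 0 T) t
  initial : u 0 =ᵐ[μ] u₀

namespace IsBoundedSolution

variable {K : ℝ → ℝ} {BK : ℝ} {LK : ℝ≥0} {h lam T M : ℝ} {u₀ : α → ℝ} {u : ℝ → α → ℝ}

theorem ae_abs_le (hu : IsBoundedSolution μ K h lam T M u₀ u) {t : ℝ} (ht : t ∈ Icc 0 T) :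
    ∀ᵐ x ∂μ, |u t x| ≤ M :=
  hu.abs_le.mono fun _ hx => hx t ht

theorem memLp_initial [IsFiniteMeasure μ] (hu : IsBoundedSolution μ K h lam T M u₀ u) :
    MemLp u₀ 2 μ :=
  MemLp.of_bound hu.measurable_initial.aestronglyMeasurable M hu.abs_initial_le

theorem memLp [IsFiniteMeasure μ] (hu : IsBoundedSolution μ K h lam T M u₀ u) {t : ℝ}
    (ht : t ∈ Icc 0 T) : MemLp (u t) 2 μ :=
  MemLp.of_bound (hu.measurable t ht).aestronglyMeasurable M (hu.ae_abs_le ht)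

theorem abs_nonlocalRHS_le [IsFiniteMeasure μ] (hu : IsBoundedSolution μ K h lam T M u₀ u)
    (hK₀ : ∀ ξ, 0 ≤ K ξ) (hKb : ∀ ξ, K ξ ≤ BK) (hlam : 0 ≤ lam) :
    ∀ᵐ x ∂μ, ∀ t ∈ Icc 0 T,
      |nonlocalRHS μ K h lam u₀ (u t) x| ≤ BK * (2 * M) * μ.real univ + lam * (M + M) := by
  filter_upwards [hu.abs_le, hu.abs_initial_le] with x hx hx₀ t ht
  exact _root_.abs_nonlocalRHS_le hK₀ hKb hlam (hu.ae_abs_le ht) (hx t ht) hx₀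

theorem memLp_nonlocalRHS [IsFiniteMeasure μ] (hu : IsBoundedSolution μ K h lam T M u₀ u)
    (hK₀ : ∀ ξ, 0 ≤ K ξ) (hKb : ∀ ξ, K ξ ≤ BK) (hK : Measurable K) (hlam : 0 ≤ lam) {t : ℝ}
    (ht : t ∈ Icc 0 T) : MemLp (nonlocalRHS μ K h lam u₀ (u t)) 2 μ :=
  MemLp.of_bound
    (measurable_nonlocalRHS hK hu.measurable_initial (hu.measurable t ht)).aestronglyMeasurable _
    ((hu.abs_nonlocalRHS_le hK₀ hKb hlam).mono fun _ hx => hx t ht)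

theorem ae_hasDerivWithinAt_sub [IsFiniteMeasure μ] (hK₀ : ∀ ξ, 0 ≤ K ξ)
    (hKb : ∀ ξ, K ξ ≤ BK) (hlam : 0 ≤ lam) {u₀₁ u₀₂ : α → ℝ} {u₁ u₂ : ℝ → α → ℝ}
    (hu₁ : IsBoundedSolution μ K h lam T M u₀₁ u₁)
    (hu₂ : IsBoundedSolution μ K h lam T M u₀₂ u₂) :
    ∀ᵐ x ∂μ, ∀ t ∈ Icc 0 T, HasDerivWithinAt (fun τ => u₁ τ x - u₂ τ x)
      (nonlocalRHS μ K h lam u₀₁ (u₁ t) x - nonlocalRHS μ K h lam u₀₂ (u₂ t) x) (Icc 0 T) t ∧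
      ‖nonlocalRHS μ K h lam u₀₁ (u₁ t) x - nonlocalRHS μ K h lam u₀₂ (u₂ t) x‖ ≤
        2 * (BK * (2 * M) * μ.real univ + lam * (M + M)) := by
  filter_upwards [hu₁.hasDerivWithinAt, hu₂.hasDerivWithinAt,
    hu₁.abs_nonlocalRHS_le hK₀ hKb hlam, hu₂.abs_nonlocalRHS_le hK₀ hKb hlam]
    with x h₁ h₂ h₃ h₄ t ht
  exact ⟨(h₁ t ht).sub (h₂ t ht), (abs_sub _ _).trans (by linarith [h₃ t ht, h₄ t ht])⟩

theorem sqrt_integral_sq_sub_le [IsFiniteMeasure μ] (hK₀ : ∀ ξ, 0 ≤ K ξ) (hKb : ∀ ξ, K ξ ≤ BK)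
    (hKlip : LipschitzWith LK K) (hh : 0 < h) (hlam : 0 ≤ lam) (hM : 0 ≤ M)
    {u₀₁ u₀₂ : α → ℝ} {u₁ u₂ : ℝ → α → ℝ} (hu₁ : IsBoundedSolution μ K h lam T M u₀₁ u₁)
    (hu₂ : IsBoundedSolution μ K h lam T M u₀₂ u₂) {t : ℝ} (ht : t ∈ Icc 0 T) :
    √(∫ x, (u₁ t x - u₂ t x) ^ 2 ∂μ) ≤
      gronwallBound 1 (2 * (BK + LK * (2 * M) / h) * μ.real univ + lam) lam T *
        √(∫ x, (u₀₁ x - u₀₂ x) ^ 2 ∂μ) := by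
  set c := 2 * (BK + LK * (2 * M) / h) * μ.real univ + lam
  have hK := hKlip.continuous.measurable
  have hLp : ∀ s ∈ Icc 0 T, ∃ Ws Gs : Lp ℝ 2 μ, Ws =ᵐ[μ] (fun x => u₁ s x - u₂ s x) ∧
      Gs =ᵐ[μ] fun x => nonlocalRHS μ K h lam u₀₁ (u₁ s) x - nonlocalRHS μ K h lam u₀₂ (u₂ s) x :=
    fun s hs => ⟨((hu₁.memLp hs).sub (hu₂.memLp hs)).toLp _,
      ((hu₁.memLp_nonlocalRHS hK₀ hKb hK hlam hs).sub
        (hu₂.memLp_nonlocalRHS hK₀ hKb hK hlam hs)).toLp _,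
      MemLp.coeFn_toLp _, MemLp.coeFn_toLp _⟩
  choose! W G hW hG using hLp
  have hmemW₀ := hu₁.memLp_initial.sub hu₂.memLp_initial
  set W₀ := hmemW₀.toLp _
  have hW₀ : W₀ =ᵐ[μ] fun x => u₀₁ x - u₀₂ x := hmemW₀.coeFn_toLp
  have hW0 : W 0 = W₀ :=
    Lp.ext ((hW 0 ⟨le_rfl, ht.1.trans ht.2⟩).trans
      ((hu₁.initial.sub hu₂.initial).trans hW₀.symm))
  have hgron := norm_le_gronwallBound_of_ae_hasDerivWithinAt ENNReal.ofNat_ne_top hW hG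
    (ae_hasDerivWithinAt_sub hK₀ hKb hlam hu₁ hu₂) fun s hs =>
      L2.norm_le_of_ae_eq_nonlocalRHS_sub hK₀ hKb hKlip hh (hu₁.measurable s hs)
        (hu₂.measurable s hs) (hu₁.ae_abs_le hs) (hu₂.ae_abs_le hs) hM hlam (hG s hs) (hW s hs)
        hW₀
  have hc : 0 ≤ c := by
    have := (hK₀ 0).trans (hKb 0)
    positivity
  rw [← L2.norm_eq_sqrt_integral_sq (hW t ht), ← L2.norm_eq_sqrt_integral_sq hW₀]
  calc ‖W t‖ ≤ gronwallBound ‖W 0‖ c (lam * ‖W₀‖) (t - 0) := hgron t ht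
    _ = ‖W₀‖ * gronwallBound 1 c lam t := by
      rw [hW0, sub_zero, mul_comm lam, ← gronwallBound_mul_left, mul_one]
    _ ≤ ‖W₀‖ * gronwallBound 1 c lam T := by
      gcongr
      exact gronwallBound_mono zero_le_one hlam hc ht.2
    _ = gronwallBound 1 c lam T * ‖W₀‖ := mul_comm _ _

end IsBoundedSolution

end BoundedSolution

theorem IsSolution.isBoundedSolution {d : ℕ} {Ω : Set (Fin d → ℝ)} {K : ℝ → ℝ}
    {h lam T M : ℝ} {u₀ : (Fin d → ℝ) → ℝ} {u : ℝ → (Fin d → ℝ) → ℝ}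
    (hu : IsSolution d Ω K h lam T u₀ u) (hΩ : MeasurableSet Ω) (hu₀ : Measurable u₀)
    (hu₀M : ∀ x ∈ Ω, |u₀ x| ≤ M) (huM : ∀ t ∈ Icc 0 T, ∀ x ∈ Ω, |u t x| ≤ M) :
    IsBoundedSolution (volume.restrict Ω) K h lam T M u₀ u where
  measurable_initial := hu₀
  abs_initial_le := (ae_restrict_mem hΩ).mono hu₀M
  measurable := hu.1
  abs_le := (ae_restrict_mem hΩ).mono fun x hx t ht => huM t ht x hx
  hasDerivWithinAt := (ae_restrict_mem hΩ).mono fun x hx t ht => hu.2.2.2 t ht x hx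
  initial := (ae_restrict_mem hΩ).mono hu.2.2.1

theorem stmt_2_general
    (d : ℕ)
    (Ω : Set (Fin d → ℝ)) (hΩopen : IsOpen Ω) (hΩbdd : Bornology.IsBounded Ω)
    (K : ℝ → ℝ) (hKnonneg : ∀ ξ, 0 ≤ K ξ) (BK : ℝ) (hKbdd : ∀ ξ, K ξ ≤ BK)
    (LK : NNReal) (hKlip : LipschitzWith LK K)
    (h : ℝ) (hh : 0 < h) (lam : ℝ) (hlam : 0 ≤ lam) (T : ℝ) (hT : 0 < T)
    (u01 u02 : (Fin d → ℝ) → ℝ)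
    (hu01m : Measurable u01) (hu02m : Measurable u02)
    (M01 : ℝ) (hu01b : ∀ x ∈ Ω, |u01 x| ≤ M01)
    (M02 : ℝ) (hu02b : ∀ x ∈ Ω, |u02 x| ≤ M02)
    (u1 u2 : ℝ → (Fin d → ℝ) → ℝ)
    (hu1 : IsSolution d Ω K h lam T u01 u1)
    (hu2 : IsSolution d Ω K h lam T u02 u2)
    (M : ℝ)
    (hu1M : ∀ t ∈ Icc (0:ℝ) T, ∀ x ∈ Ω, |u1 t x| ≤ M)
    (hu2M : ∀ t ∈ Icc (0:ℝ) T, ∀ x ∈ Ω, |u2 t x| ≤ M) :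
    ∃ C > (0:ℝ), ∀ t ∈ Icc (0:ℝ) T,
      Real.sqrt (∫ x in Ω, (u1 t x - u2 t x) ^ 2) ≤
        C * Real.sqrt (∫ x in Ω, (u01 x - u02 x) ^ 2) := by
  set M' := max (max M 0) (max M01 M02)
  have hM : M ≤ M' := (le_max_left _ _).trans (le_max_left _ _)
  have hM' : 0 ≤ M' := (le_max_right _ _).trans (le_max_left _ _)
  have hM01 : M01 ≤ M' := (le_max_left _ _).trans (le_max_right _ _)
  have hM02 : M02 ≤ M' := (le_max_right _ _).trans (le_max_right _ _)
  have hΩ := hΩopen.measurableSet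
  have hu₁ := hu1.isBoundedSolution hΩ hu01m (fun x hx => (hu01b x hx).trans hM01)
    fun t ht x hx => (hu1M t ht x hx).trans hM
  have hu₂ := hu2.isBoundedSolution hΩ hu02m (fun x hx => (hu02b x hx).trans hM02)
    fun t ht x hx => (hu2M t ht x hx).trans hM
  have : IsFiniteMeasure (volume.restrict Ω) :=
    isFiniteMeasure_restrict.mpr hΩbdd.measure_lt_top.ne
  have hc : 0 ≤ 2 * (BK + LK * (2 * M') / h) * (volume.restrict Ω).real univ + lam := by
    have := (hKnonneg 0).trans (hKbdd 0)
    positivity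
  exact ⟨_, zero_lt_one.trans_le (one_le_gronwallBound hc hlam hT.le), fun t ht =>
    IsBoundedSolution.sqrt_integral_sq_sub_le hKnonneg hKbdd hKlip hh hlam hM' hu₁ hu₂ ht⟩

/-- L² stability with respect to the initial datum: if `u1, u2` solve
P(Ω,u01), P(Ω,u02) and are bounded by `M` on `[0,T]×Ω`, then there is a constant
`C > 0` (depending only on `T, λ, |Ω|, h, M` and on the bound and Lipschitz constant
of `K`) such that `‖u1(t,·) − u2(t,·)‖_{L²(Ω)} ≤ C ‖u01 − u02‖_{L²(Ω)}` for all
`t ∈ [0,T]`. -/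
theorem stmt_2
    (d : ℕ) (hd : 1 ≤ d)
    (Ω : Set (Fin d → ℝ)) (hΩopen : IsOpen Ω) (hΩbdd : Bornology.IsBounded Ω)
    (K : ℝ → ℝ) (hKnonneg : ∀ ξ, 0 ≤ K ξ) (BK : ℝ) (hKbdd : ∀ ξ, K ξ ≤ BK)
    (LK : NNReal) (hKlip : LipschitzWith LK K)
    (h : ℝ) (hh : 0 < h) (lam : ℝ) (hlam : 0 ≤ lam) (T : ℝ) (hT : 0 < T)
    (u01 u02 : (Fin d → ℝ) → ℝ)
    (hu01m : Measurable u01) (hu02m : Measurable u02)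
    (M01 : ℝ) (hu01b : ∀ x ∈ Ω, |u01 x| ≤ M01)
    (M02 : ℝ) (hu02b : ∀ x ∈ Ω, |u02 x| ≤ M02)
    (u1 u2 : ℝ → (Fin d → ℝ) → ℝ)
    (hu1 : IsSolution d Ω K h lam T u01 u1)
    (hu2 : IsSolution d Ω K h lam T u02 u2)
    (M : ℝ)
    (hu1M : ∀ t ∈ Icc (0:ℝ) T, ∀ x ∈ Ω, |u1 t x| ≤ M)
    (hu2M : ∀ t ∈ Icc (0:ℝ) T, ∀ x ∈ Ω, |u2 t x| ≤ M) :
    ∃ C > (0:ℝ), ∀ t ∈ Icc (0:ℝ) T,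
      Real.sqrt (∫ x in Ω, (u1 t x - u2 t x) ^ 2) ≤
        C * Real.sqrt (∫ x in Ω, (u01 x - u02 x) ^ 2) :=
  stmt_2_general d Ω hΩopen hΩbdd K hKnonneg BK hKbdd LK hKlip h hh lam hlam T hT u01 u02 hu01m
    hu02m M01 hu01b M02 hu02b u1 u2 hu1 hu2 M hu1M hu2M
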